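/- (Corona pedigree collapse) Let G be a finite simple graph, k ≥ 1, and let S be a nonempty set of vertices such that the subgraph of G induced on S is connected and every vertex u ∈ S satisfies C(u,G) = k and CS(u,G) = 1. Then for any edge e = {u,m} of G with u ∈ S and m ∈ SN(u,G) (in particular for any edge with both endpoints in S), removing e makes every vertex of S collapse: C(w, G−e) = k − 1 for all w ∈ S. -/

import Mathlib

/-- A set `S` of vertices is `k`-supported in `G` if every vertex of `S`
has at least `k` neighbors inside `S`. -/
def kSupported {V : Type*} (G : SimpleGraph V) (k : ℕ) (S : Set V) : Prop :=
  ∀ i ∈ S, k ≤ {j | j ∈ S ∧ G.Adj i j}.ncard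

/-- The `k`-core of `G`: the union of all `k`-supported sets. -/
def kCore {V : Type*} (G : SimpleGraph V) (k : ℕ) : Set V :=
  ⋃₀ {S | kSupported G k S}

/-- The core value `C(i,G)` of a vertex `i`: the largest `k` with `i ∈ V_k(G)`. -/
noncomputable def coreValue {V : Type*} (G : SimpleGraph V) (i : V) : ℕ :=
  sSup {k | i ∈ kCore G k}

/-- The supportive neighbors of `i` at level `k`:
neighbors `j` of `i` with core value at least `k`. -/
def SN {V : Type*} (G : SimpleGraph V) (i : V) (k : ℕ) : Set V :=
  {j | G.Adj i j ∧ k ≤ coreValue G j}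

/-- `SN(i,G)`: abbreviation for `SN(i, C(i,G), G)`. -/
noncomputable def SNc {V : Type*} (G : SimpleGraph V) (i : V) : Set V :=
  SN G i (coreValue G i)

/-- The core strength `CS(i,G) = |SN(i,G)| - C(i,G) + 1`. -/
noncomputable def CS {V : Type*} (G : SimpleGraph V) (i : V) : ℕ :=
  (SNc G i).ncard - coreValue G i + 1


/-!
Let `G' = G - e` and `T` be the `k`-core of `G'`. A vertex `s` with `C(s,G) = k` and
`CS(s,G) = 1` has exactly `k` supportive neighbours, so if `s ∈ T` then every one of them
must still be a neighbour of `s` in `T`. Hence `u ∉ T` (it lost the supportive neighbour `m`),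
and `s ∉ T` propagates to every neighbour of `s` in `S`, since `s` is supportive for it; by
connectivity no vertex of `S` lies in `T`. Conversely, deleting one edge costs each vertex at most
one neighbour, so the old `k`-core stays `(k-1)`-supported in `G'`.
-/

namespace SimpleGraph

theorem Reachable.induction_on_adj {W : Type*} {H : SimpleGraph W} {P : W → Prop} {x y : W}
    (h : H.Reachable x y) (hP : ∀ a b, H.Adj a b → P a → P b) (hx : P x) : P y := by
  rw [reachable_iff_reflTransGen] at h
  induction h with
  | refl => exact hx
  | tail _ hab ih => exact hP _ _ hab ih

end SimpleGraph

section Core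

variable {V : Type*} {G H : SimpleGraph V} {j k : ℕ} {S : Set V} {i u m : V}

theorem kSupported.mono (h : j ≤ k) (hS : kSupported G k S) : kSupported G j S :=
  fun i hi => h.trans (hS i hi)

theorem kSupported.subset_kCore (hS : kSupported G k S) : S ⊆ kCore G k :=
  fun _ hi => Set.mem_sUnion.2 ⟨S, hS, hi⟩

theorem kSupported.of_le [Finite V] (hHG : H ≤ G) (hS : kSupported H k S) :
    kSupported G k S :=
  fun i hi => (hS i hi).trans <|
    Set.ncard_le_ncard (fun _ ⟨hj, hadj⟩ => ⟨hj, hHG hadj⟩) (Set.toFinite _)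

theorem kSupported_kCore [Finite V] (G : SimpleGraph V) (k : ℕ) :
    kSupported G k (kCore G k) := by
  rintro i ⟨T, hT, hiT⟩
  exact (hT i hiT).trans <| Set.ncard_le_ncard
    (fun _ ⟨hj, hadj⟩ => ⟨hT.subset_kCore hj, hadj⟩) (Set.toFinite _)

theorem kCore_anti (h : j ≤ k) : kCore G k ⊆ kCore G j := by
  rintro i ⟨T, hT, hiT⟩
  exact ⟨T, hT.mono h, hiT⟩

theorem kCore_mono [Finite V] (hHG : H ≤ G) : kCore H k ⊆ kCore G k :=
  ((kSupported_kCore H k).of_le hHG).subset_kCore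

theorem le_coreValue_iff [Finite V] : k ≤ coreValue G i ↔ i ∈ kCore G k := by
  have hbdd : BddAbove {k | i ∈ kCore G k} := ⟨Nat.card V, fun k ⟨T, hT, hiT⟩ =>
    (hT i hiT).trans <| (Set.ncard_le_ncard (Set.subset_univ _)).trans_eq (Set.ncard_univ V)⟩
  have hzero : i ∈ kCore G 0 :=
    kSupported.subset_kCore (S := Set.univ) (fun _ _ => Nat.zero_le _) trivial
  exact ⟨fun h => kCore_anti h (Nat.sSup_mem ⟨0, hzero⟩ hbdd), fun h => le_csSup hbdd h⟩

theorem coreValue_le_ncard_SNc [Finite V] (G : SimpleGraph V) (i : V) :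
    coreValue G i ≤ (SNc G i).ncard :=
  (kSupported_kCore G _ i (le_coreValue_iff.1 le_rfl)).trans <| Set.ncard_le_ncard
    (fun _ ⟨hj, hadj⟩ => ⟨hadj, le_coreValue_iff.2 hj⟩) (Set.toFinite _)

theorem ncard_SNc_eq_coreValue_of_CS_eq_one [Finite V] (h : CS G i = 1) :
    (SNc G i).ncard = coreValue G i := by
  have := coreValue_le_ncard_SNc G i
  unfold CS at h
  omega

theorem kSupported.deleteEdges [Finite V] (hS : kSupported G k S) :
    kSupported (G.deleteEdges {s(u, m)}) (k - 1) S := by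
  classical
  intro i hi
  set other := if i = u then m else u
  have hsub : {j | j ∈ S ∧ G.Adj i j} ⊆
      insert other {j | j ∈ S ∧ (G.deleteEdges {s(u, m)}).Adj i j} := by
    rintro j ⟨hj, hadj⟩
    by_cases hdel : s(i, j) = s(u, m)
    · left
      rcases Sym2.eq_iff.1 hdel with ⟨rfl, rfl⟩ | ⟨rfl, rfl⟩
      · simp [other]
      · simp [other, hadj.ne]
    · exact Or.inr ⟨hj, SimpleGraph.deleteEdges_adj.2 ⟨hadj, hdel⟩⟩
  have := (Set.ncard_le_ncard hsub (Set.toFinite _)).trans (Set.ncard_insert_le _ _)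
  have := hS i hi
  omega

theorem SN_subset_of_mem_kCore [Finite V] (hHG : H ≤ G) (hi : i ∈ kCore H k)
    (hcard : (SN G i k).ncard ≤ k) : SN G i k ⊆ {j | j ∈ kCore H k ∧ H.Adj i j} := by
  have hsub : {j | j ∈ kCore H k ∧ H.Adj i j} ⊆ SN G i k :=
    fun _ ⟨hj, hadj⟩ => ⟨hHG hadj, le_coreValue_iff.2 (kCore_mono hHG hj)⟩
  exact (Set.eq_of_subset_of_ncard_le hsub
    (hcard.trans (kSupported_kCore H k i hi)) (Set.toFinite _)).ge

end Core

theorem stmt_13_general {V : Type*} [Fintype V] (G : SimpleGraph V) (k : ℕ)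
    (S : Set V)
    (hconn : (G.induce S).Connected)
    (hcore : ∀ u ∈ S, coreValue G u = k ∧ CS G u = 1)
    (u m : V) (hu : u ∈ S) (hm : m ∈ SNc G u) :
    ∀ w ∈ S, coreValue (G.deleteEdges {s(u, m)}) w = k - 1 := by
  set G' := G.deleteEdges {s(u, m)}
  have hG' : G' ≤ G := G.deleteEdges_le _
  have htight : ∀ s ∈ S, s ∈ kCore G' k → SN G s k ⊆ {j | j ∈ kCore G' k ∧ G'.Adj s j} :=
    fun s hs hsT => SN_subset_of_mem_kCore hG' hsT <| by
      obtain ⟨hcv, hcs⟩ := hcore s hs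
      have := ncard_SNc_eq_coreValue_of_CS_eq_one hcs
      rw [SNc, hcv] at this
      exact this.le
  have hu_notin : u ∉ kCore G' k := fun huT => by
    have hm' : m ∈ SN G u k := (hcore u hu).1 ▸ hm
    simpa [G'] using (htight u hu huT hm').2
  have hnotin : ∀ w ∈ S, w ∉ kCore G' k := fun w hw =>
    (hconn.preconnected ⟨u, hu⟩ ⟨w, hw⟩).induction_on_adj
      (P := fun s : S => (s : V) ∉ kCore G' k)
      (fun a b hab ha hbT => ha (htight b b.2 hbT
        ⟨hab.symm, (hcore a a.2).1.ge⟩).1) hu_notin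
  intro w hw
  have hwk : w ∈ kCore G k := le_coreValue_iff.1 (hcore w hw).1.ge
  have hge : k - 1 ≤ coreValue G' w :=
    le_coreValue_iff.2 ((kSupported_kCore G k).deleteEdges.subset_kCore hwk)
  have hlt : ¬ k ≤ coreValue G' w := fun h => hnotin w hw (le_coreValue_iff.1 h)
  omega

theorem stmt_13 {V : Type*} [Fintype V] (G : SimpleGraph V) (k : ℕ)
    (hk : 1 ≤ k) (S : Set V) (hS : S.Nonempty)
    (hconn : (G.induce S).Connected)
    (hcore : ∀ u ∈ S, coreValue G u = k ∧ CS G u = 1)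
    (u m : V) (hu : u ∈ S) (hm : m ∈ SNc G u) :
    ∀ w ∈ S, coreValue (G.deleteEdges {s(u, m)}) w = k - 1 :=
  stmt_13_general G k S hconn hcore u m hu hm
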